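/- arXiv:1611.09985 — 3 statements merged into one kernel-verified Lean document; each statement's English description precedes it below -/
import Mathlib

section
/- For the Rudin-Shapiro sequence r and for all m ∈ ℕ and e < 2^(l-1) with l ≥ 1, we have r(2^l · m + e) = r(m) · r(e). -/
def s2 (n : ℕ) : ℕ := (Nat.digits 2 n).sum

def t (n : ℕ) : ℤ := (-1) ^ (s2 n)

def f11 (n : ℕ) : ℕ :=
  ((Finset.range n).filter (fun i => n.testBit i ∧ n.testBit (i + 1))).card

def r (n : ℕ) : ℤ := (-1) ^ (f11 n)

/-!
Writing `n = 2 ^ l * m + e` puts the binary digits of `e` in positions `< l` and those of `m`,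
shifted by `l`, above them. Since `e < 2 ^ (l - 1)`, bit `l - 1` of `n` is zero, so no block `11`
straddles the seam: the `11`-blocks of `n` are those of `e` together with the shifted ones of `m`,
hence `f₁₁(n) = f₁₁(m) + f₁₁(e)`.
-/

open Finset

def blocks11Below (N n : ℕ) : Finset ℕ := {i ∈ range N | n.testBit i ∧ n.testBit (i + 1)}

lemma Nat.lt_of_testBit_of_lt_two_pow {n i N : ℕ} (hi : n.testBit i) (hn : n < 2 ^ N) : i < N :=
  (Nat.pow_lt_pow_iff_right (by norm_num)).1 ((Nat.ge_two_pow_of_testBit hi).trans_lt hn)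

lemma f11_eq_card_blocks11Below {n N : ℕ} (hn : n < 2 ^ N) : f11 n = #(blocks11Below N n) := by
  unfold f11 blocks11Below
  congr 1
  ext i
  simp only [mem_filter, mem_range, and_congr_left_iff]
  rintro ⟨hi, -⟩
  have hin : i < n := Nat.lt_of_testBit_of_lt_two_pow hi Nat.lt_two_pow_self
  have hiN : i < N := Nat.lt_of_testBit_of_lt_two_pow hi hn
  exact ⟨fun _ => hiN, fun _ => hin⟩

lemma blocks11Below_two_pow_mul_add {l m e : ℕ} (he : e < 2 ^ (l - 1)) :
    blocks11Below (l + m) (2 ^ l * m + e)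
      = (blocks11Below m m).map (addRightEmbedding l) ∪ blocks11Below (l - 1) e := by
  have hel : e < 2 ^ l := he.trans_le (Nat.pow_le_pow_right (by norm_num) (Nat.sub_le l 1))
  have hseamBit : e.testBit (l - 1) = false := Nat.testBit_lt_two_pow he
  ext i
  simp only [blocks11Below, mem_union, mem_map, mem_filter, mem_range, addRightEmbedding_apply,
    Nat.testBit_two_pow_mul_add m hel]
  rcases lt_or_ge i l with hil | hil
  · rw [if_pos hil]
    by_cases hseam : i = l - 1
    · subst hseam
      constructor
      · rintro ⟨-, hbit, -⟩
        simp [hseamBit] at hbit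
      · rintro (⟨a, -, ha⟩ | ⟨hlt, -⟩) <;> omega
    · rw [if_pos (by omega)]
      constructor
      · rintro ⟨-, hbits⟩
        exact .inr ⟨by omega, hbits⟩
      · rintro (⟨a, -, rfl⟩ | ⟨-, hbits⟩)
        · omega
        · exact ⟨by omega, hbits⟩
  · rw [if_neg (not_lt.2 hil), if_neg (by omega), show i + 1 - l = i - l + 1 by omega]
    constructor
    · rintro ⟨hi, hbits⟩
      exact .inl ⟨i - l, ⟨by omega, hbits⟩, by omega⟩
    · rintro (⟨a, ⟨ha, hbits⟩, rfl⟩ | ⟨hi, -⟩)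
      · rw [Nat.add_sub_cancel]
        exact ⟨by omega, hbits⟩
      · omega

lemma f11_two_pow_mul_add {l m e : ℕ} (he : e < 2 ^ (l - 1)) :
    f11 (2 ^ l * m + e) = f11 m + f11 e := by
  have hn : 2 ^ l * m + e < 2 ^ (l + m) := by
    have hel : e < 2 ^ l := he.trans_le (Nat.pow_le_pow_right (by norm_num) (Nat.sub_le l 1))
    calc 2 ^ l * m + e < 2 ^ l * (m + 1) := by rw [mul_add_one]; omega
      _ ≤ 2 ^ l * 2 ^ m := Nat.mul_le_mul_left _ Nat.lt_two_pow_self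
      _ = 2 ^ (l + m) := (pow_add 2 l m).symm
  have hdisj :
      Disjoint ((blocks11Below m m).map (addRightEmbedding l)) (blocks11Below (l - 1) e) := by
    refine disjoint_left.2 fun i him hie => ?_
    simp only [blocks11Below, mem_map, mem_filter, mem_range, addRightEmbedding_apply] at him hie
    omega
  rw [f11_eq_card_blocks11Below hn, blocks11Below_two_pow_mul_add he, card_union_of_disjoint hdisj,
    card_map, ← f11_eq_card_blocks11Below Nat.lt_two_pow_self, ← f11_eq_card_blocks11Below he]

theorem rudin_shapiro_block_mult'_general (l m e : ℕ) (he : e < 2 ^ (l - 1)) :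
    r (2 ^ l * m + e) = r m * r e := by
  rw [r, r, r, f11_two_pow_mul_add he, pow_add]

theorem rudin_shapiro_block_mult' (l m e : ℕ) (hl : 1 ≤ l) (he : e < 2 ^ (l - 1)) :
    r (2 ^ l * m + e) = r m * r e :=
  rudin_shapiro_block_mult'_general l m e he
end

section
/- Let δ(r; e)_ω = ⌊(r_ω + e₀ + Σ_{i=1}^s ωᵢ eᵢ)/2⌋ for e ∈ {0,1}^(s+1). If r ∈ ℕ^({0,1}^s) satisfies 0 ≤ r_ω ≤ |ω| for all ω (where |ω| = Σᵢ ωᵢ), then also 0 ≤ δ(r;e)_ω ≤ |ω| for all ω and all e ∈ {0,1}^(s+1). -/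
theorem delta_preserves_bounds (s : ℕ) (r : (Fin s → Bool) → ℕ)
    (hr : ∀ ω, r ω ≤ ∑ i : Fin s, if ω i then 1 else 0)
    (e : Fin (s + 1) → ℕ) (he : ∀ i, e i ≤ 1) :
    ∀ ω : Fin s → Bool,
      (r ω + e 0 + ∑ i : Fin s, if ω i then e i.succ else 0) / 2 ≤
        ∑ i : Fin s, if ω i then 1 else 0 := by
  intro ω
  have h1 := hr ω
  have h0 := he 0
  have h2 : (∑ i : Fin s, if ω i then e i.succ else 0) ≤
      ∑ i : Fin s, if ω i then 1 else 0 := by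
    apply Finset.sum_le_sum
    intro i _
    split
    · exact he _
    · exact le_refl _
  omega
end

section
/- The 2-kernel of the Rudin-Shapiro sequence, i.e., the set of sequences n ↦ r(2^l n + m) for l ≥ 0 and 0 ≤ m < 2^l, equals the four-element set { r(n), -r(n), r(2n+1), -r(2n+1) }. In particular the 2-kernel is symmetric: it is closed under negation. -/
/-!
The kernel of a sequence is the smallest set of sequences containing it and closed under the
decimations `f ↦ (n ↦ f (2 n + b))`, `b ∈ {0, 1}`. Appending a bit to `n` creates a new block `11`
exactly when both the new bit and the old last bit are `1`, which gives the recurrences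
`r (2n) = r n`, `r (4n+1) = r n`, `r (4n+3) = -r (2n+1)`. By these, `{±r, ±r(2·+1)}` is closed
under decimation, so it contains the kernel; conversely its four members are `r` decimated along
`n`, `8n + 3`, `2n + 1` and `4n + 3`.
-/

def seqKernel {α : Type*} (k : ℕ) (a : ℕ → α) : Set (ℕ → α) :=
  {f | ∃ l m : ℕ, m < k ^ l ∧ f = fun n => a (k ^ l * n + m)}

theorem seqKernel_subset_of_decimation_mem {α : Type*} {k : ℕ} {a : ℕ → α} {S : Set (ℕ → α)}
    (ha : a ∈ S) (hS : ∀ f ∈ S, ∀ b < k, (fun n => f (k * n + b)) ∈ S) :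
    seqKernel k a ⊆ S := by
  suffices h : ∀ l, ∀ m < k ^ l, ∀ f ∈ S, (fun n => f (k ^ l * n + m)) ∈ S by
    rintro _ ⟨l, m, hm, rfl⟩
    exact h l m hm a ha
  intro l
  induction l with
  | zero =>
    intro m hm f hf
    obtain rfl : m = 0 := by simpa using hm
    simpa using hf
  | succ l ih =>
    intro m hm f hf
    have hk : 0 < k := Nat.pos_of_ne_zero fun hk => by simp [hk] at hm
    have hq : m / k < k ^ l := Nat.div_lt_of_lt_mul (by rwa [pow_succ'] at hm)
    have hsplit : ∀ n, k ^ (l + 1) * n + m = k * (k ^ l * n + m / k) + m % k := fun n => by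
      conv_lhs => rw [← Nat.div_add_mod m k]
      ring
    simp only [hsplit]
    exact ih (m / k) hq _ (hS f hf (m % k) (Nat.mod_lt m hk))

theorem f11_eq_card_filter_range_of_le {n K : ℕ} (h : n ≤ K) :
    f11 n = ((Finset.range K).filter (fun i => n.testBit i ∧ n.testBit (i + 1))).card := by
  refine congrArg Finset.card (Finset.ext fun i => ?_)
  simp only [Finset.mem_filter, Finset.mem_range]
  refine ⟨fun ⟨hi, hbit⟩ => ⟨hi.trans_le h, hbit⟩, fun ⟨_, hi, hi'⟩ => ⟨?_, hi, hi'⟩⟩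
  by_contra! hni
  rw [Nat.testBit_eq_false_of_lt (hni.trans_lt i.lt_two_pow_self)] at hi
  exact Bool.false_ne_true hi

theorem f11_two_mul_add {n b : ℕ} (hb : b < 2) :
    f11 (2 * n + b) = f11 n + if b = 1 ∧ n % 2 = 1 then 1 else 0 := by
  have hshift : ∀ i, (2 * n + b).testBit (i + 1) = n.testBit i := fun i => by
    rw [Nat.testBit_succ, show (2 * n + b) / 2 = n by omega]
  rw [f11_eq_card_filter_range_of_le (show 2 * n + b ≤ 2 * n + 1 + 1 by omega),
    Finset.card_filter, Finset.sum_range_succ',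
    f11_eq_card_filter_range_of_le (show n ≤ 2 * n + 1 by omega), Finset.card_filter]
  simp only [hshift]
  congr 1
  rw [Nat.testBit_zero, Nat.testBit_zero]
  interval_cases b <;> rcases Nat.mod_two_eq_zero_or_one n with h | h <;> simp [h]

theorem f11_two_mul (n : ℕ) : f11 (2 * n) = f11 n := by
  simpa using f11_two_mul_add (n := n) (b := 0) (by norm_num)

theorem f11_four_mul_add_one (n : ℕ) : f11 (4 * n + 1) = f11 n := by
  rw [show 4 * n + 1 = 2 * (2 * n) + 1 by ring, f11_two_mul_add (by norm_num), f11_two_mul]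
  simp

theorem f11_four_mul_add_three (n : ℕ) : f11 (4 * n + 3) = f11 (2 * n + 1) + 1 := by
  rw [show 4 * n + 3 = 2 * (2 * n + 1) + 1 by ring, f11_two_mul_add (by norm_num)]
  simp

theorem r_two_mul (n : ℕ) : r (2 * n) = r n := by
  rw [r, r, f11_two_mul]

theorem r_four_mul_add_one (n : ℕ) : r (4 * n + 1) = r n := by
  rw [r, r, f11_four_mul_add_one]

theorem r_four_mul_add_three (n : ℕ) : r (4 * n + 3) = -r (2 * n + 1) := by
  rw [r, r, f11_four_mul_add_three, pow_succ, mul_neg_one]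

theorem r_decimation_mem {f : ℕ → ℤ}
    (hf : f ∈ ({fun n => r n, fun n => -r n, fun n => r (2 * n + 1), fun n => -r (2 * n + 1)} :
      Set (ℕ → ℤ))) {b : ℕ} (hb : b < 2) :
    (fun n => f (2 * n + b)) ∈ ({fun n => r n, fun n => -r n, fun n => r (2 * n + 1),
      fun n => -r (2 * n + 1)} : Set (ℕ → ℤ)) := by
  have h4n1 : ∀ n, r (2 * (2 * n) + 1) = r n := fun n => by
    rw [show 2 * (2 * n) + 1 = 4 * n + 1 by ring, r_four_mul_add_one]
  have h4n3 : ∀ n, r (2 * (2 * n + 1) + 1) = -r (2 * n + 1) := fun n => by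
    rw [show 2 * (2 * n + 1) + 1 = 4 * n + 3 by ring, r_four_mul_add_three]
  rcases hf with rfl | rfl | rfl | rfl <;> interval_cases b <;>
    simp [r_two_mul, h4n1, h4n3]

theorem rudin_shapiro_kernel :
    {f : ℕ → ℤ | ∃ l m : ℕ, m < 2 ^ l ∧ f = fun n => r (2 ^ l * n + m)} =
      {fun n => r n, fun n => -r n, fun n => r (2 * n + 1), fun n => -r (2 * n + 1)} := by
  change seqKernel 2 r = _
  refine (seqKernel_subset_of_decimation_mem (Or.inl rfl) fun f hf b hb =>
    r_decimation_mem hf hb).antisymm ?_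
  rintro f (rfl | rfl | rfl | rfl)
  · exact ⟨0, 0, by norm_num, by simp⟩
  · refine ⟨3, 3, by norm_num, funext fun n => ?_⟩
    rw [show 2 ^ 3 * n + 3 = 4 * (2 * n) + 3 by ring, r_four_mul_add_three,
      show 2 * (2 * n) + 1 = 4 * n + 1 by ring, r_four_mul_add_one]
  · exact ⟨1, 1, by norm_num, by simp⟩
  · refine ⟨2, 3, by norm_num, funext fun n => ?_⟩
    rw [show 2 ^ 2 * n + 3 = 4 * n + 3 by ring, r_four_mul_add_three]
end
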